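/- arXiv:2503.00820 — 7 statements merged into one kernel-verified Lean document; each statement's English description precedes it below -/
import Mathlib

section
/- A partial injective order-preserving map α on {1,...,n} whose domain and image both have size n-1 extends to a unique permutation of {1,...,n}; moreover this extension is an even permutation if and only if the unique element missing from the domain and the unique element missing from the image have the same parity. -/
/-- Partial transformations on `Fin n`, represented as `Option`-valued maps. -/
abbrev PT (n : ℕ) := Fin n → Option (Fin n)

/-- Left-to-right composition of partial maps: `x (pcomp f g) = (x f) g`. -/
def pcomp {n : ℕ} (f g : PT n) : PT n := fun x => (f x).bind g

/-- The identity partial map. -/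
def pid (n : ℕ) : PT n := fun x => some x

instance PTMonoid (n : ℕ) : Monoid (PT n) where
  mul := pcomp
  one := pid n
  mul_assoc f g h := funext fun x => by
    show ((f x).bind g).bind h = (f x).bind fun y => (g y).bind h
    cases f x <;> rfl
  one_mul f := rfl
  mul_one f := funext fun x => by
    show (f x).bind (fun y => some y) = f x
    cases f x <;> rfl

/-- `f` is injective on its domain. -/
def pInj {n : ℕ} (f : PT n) : Prop := ∀ x y a, f x = some a → f y = some a → x = y

/-- The domain of a partial map. -/
def pDom {n : ℕ} (f : PT n) : Finset (Fin n) := Finset.univ.filter fun x => (f x).isSome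

/-- The image of a partial map. -/
def pIm {n : ℕ} (f : PT n) : Finset (Fin n) := Finset.univ.filter fun b => ∃ x, f x = some b

/-- The rank of a partial map is the size of its domain. -/
def prank {n : ℕ} (f : PT n) : ℕ := (pDom f).card

/-- Order-preserving partial maps. -/
def orderPres {n : ℕ} (f : PT n) : Prop :=
  ∀ x y a b, f x = some a → f y = some b → x ≤ y → a ≤ b

/-- Order-reversing partial maps. -/
def orderRev {n : ℕ} (f : PT n) : Prop :=
  ∀ x y a b, f x = some a → f y = some b → x ≤ y → b ≤ a

/-- Monotone partial maps. -/
def isMonotonePT {n : ℕ} (f : PT n) : Prop := orderPres f ∨ orderRev f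

/-- The permutation `σ` extends the partial map `f`. -/
def extendsTo {n : ℕ} (σ : Equiv.Perm (Fin n)) (f : PT n) : Prop :=
  ∀ x a, f x = some a → σ x = a

/-- Membership in the alternating inverse monoid `AI_n`: an injective partial map of
rank `≤ n - 2`, or one that extends to an even permutation. -/
def inAI {n : ℕ} (f : PT n) : Prop :=
  pInj f ∧ (prank f + 2 ≤ n ∨
    ∃ σ : Equiv.Perm (Fin n), σ ∈ alternatingGroup (Fin n) ∧ extendsTo σ f)

/-- `AO_n = AI_n ∩ POI_n`. -/
def AO (n : ℕ) : Set (PT n) := {f | orderPres f ∧ inAI f}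

/-- `AM_n = AI_n ∩ PMI_n`. -/
def AM (n : ℕ) : Set (PT n) := {f | isMonotonePT f ∧ inAI f}

/-- Green's `J`-relation relative to a submonoid-like subset `S` (containing the identity):
`a J b` iff each lies in the two-sided principal ideal of the other. -/
def JRelIn {n : ℕ} (S : Set (PT n)) (a b : PT n) : Prop :=
  (∃ u v, u ∈ S ∧ v ∈ S ∧ a = u * b * v) ∧ (∃ u v, u ∈ S ∧ v ∈ S ∧ b = u * a * v)

/-!
Removing `d` from `Fin (m + 1)`, the map `d.cycleRange` is the increasing bijection onto
`Fin m` (embedded as `0, …, m - 1`), and `i.cycleRange⁻¹` is the increasing bijection from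
there onto the complement of `i`; so the completion is `i.cycleRange⁻¹ * d.cycleRange`. As
`k.cycleRange` is a `(k + 1)`-cycle, of sign `(-1) ^ k`, the completion has sign
`(-1) ^ (d + i)`.
-/

namespace Equiv.Perm

theorem eq_of_forall_ne_apply_eq {α : Type*} {σ τ : Perm α} (a : α)
    (h : ∀ x, x ≠ a → σ x = τ x) : σ = τ := by
  have ha : σ a = τ a := by
    by_contra hne
    set y := τ.symm (σ a)
    have hya : y ≠ a := fun e => hne (by rw [← τ.apply_symm_apply (σ a)]; exact congrArg τ e)
    exact hya (σ.injective (by rw [h y hya, τ.apply_symm_apply]))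
  ext x
  by_cases hx : x = a
  · rw [hx, ha]
  · exact h x hx

end Equiv.Perm

namespace Fin

/-- The permutation of `Fin (m + 1)` sending `d` to `i` and increasing on the other points. -/
def completion {m : ℕ} (d i : Fin (m + 1)) : Equiv.Perm (Fin (m + 1)) :=
  i.cycleRange⁻¹ * d.cycleRange

theorem completion_succAbove {m : ℕ} (d i : Fin (m + 1)) (j : Fin m) :
    completion d i (d.succAbove j) = i.succAbove j := by
  simp only [completion, Equiv.Perm.mul_apply, cycleRange_succAbove]
  exact cycleRange_symm_succ i j

theorem sign_completion {m : ℕ} (d i : Fin (m + 1)) :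
    Equiv.Perm.sign (completion d i) = (-1) ^ ((d : ℕ) + i) := by
  rw [completion, map_mul, map_inv, sign_cycleRange, sign_cycleRange, pow_add,
    Int.units_inv_eq_self, mul_comm]

theorem completion_mem_alternatingGroup_iff {m : ℕ} (d i : Fin (m + 1)) :
    completion d i ∈ alternatingGroup (Fin (m + 1)) ↔ (d : ℕ) % 2 = (i : ℕ) % 2 := by
  rw [Equiv.Perm.mem_alternatingGroup, sign_completion, ← Units.val_inj, Units.val_pow_eq_pow_val,
    Units.val_neg, Units.val_one, neg_one_pow_eq_one_iff_even (by norm_num), Nat.even_add,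
    Nat.even_iff, Nat.even_iff]
  omega

end Fin

section RankOneBelow

variable {m : ℕ} {f : PT (m + 1)} {d i : Fin (m + 1)}

theorem isSome_iff_ne_of_pDom_eq (hd : pDom f = Finset.univ.erase d) (x : Fin (m + 1)) :
    (f x).isSome ↔ x ≠ d := by
  simpa [pDom] using Finset.ext_iff.mp hd x

theorem mem_range_iff_ne_of_pIm_eq (hi : pIm f = Finset.univ.erase i) (b : Fin (m + 1)) :
    (∃ x, f x = some b) ↔ b ≠ i := by
  simpa [pIm] using Finset.ext_iff.mp hi b

/-- Both `j ↦ f (d.succAbove j)` and `i.succAbove` enumerate `{i}ᶜ` increasingly. -/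
theorem apply_succAbove_eq_some (hinj : pInj f) (hop : orderPres f)
    (hd : pDom f = Finset.univ.erase d) (hi : pIm f = Finset.univ.erase i) (j : Fin m) :
    f (d.succAbove j) = some (i.succAbove j) := by
  have hsome j := (isSome_iff_ne_of_pDom_eq hd (d.succAbove j)).mpr (Fin.succAbove_ne d j)
  set g : Fin m → Fin (m + 1) := fun j => (f (d.succAbove j)).get (hsome j)
  have hfg j : f (d.succAbove j) = some (g j) := (Option.some_get (hsome j)).symm
  have hg : StrictMono g := fun j k hjk =>
    lt_of_le_of_ne (hop _ _ _ _ (hfg j) (hfg k) (Fin.succAbove_lt_succAbove_iff.mpr hjk).le)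
      fun e => hjk.ne (Fin.succAbove_right_injective (hinj _ _ _ (hfg j) (e ▸ hfg k)))
  have hrange : Set.range g = Set.range i.succAbove := by
    ext b
    rw [Fin.range_succAbove, Set.mem_compl_singleton_iff, ← mem_range_iff_ne_of_pIm_eq hi]
    constructor
    · rintro ⟨j, rfl⟩
      exact ⟨_, hfg j⟩
    · rintro ⟨x, hx⟩
      obtain ⟨j, rfl⟩ :=
        Fin.exists_succAbove_eq ((isSome_iff_ne_of_pDom_eq hd x).mp (by simp [hx]))
      exact ⟨j, Option.some_injective _ ((hfg j).symm.trans hx)⟩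
  rw [hfg, (hg.range_inj (Fin.strictMono_succAbove i)).mp hrange]

theorem extendsTo_completion (hinj : pInj f) (hop : orderPres f)
    (hd : pDom f = Finset.univ.erase d) (hi : pIm f = Finset.univ.erase i) :
    extendsTo (Fin.completion d i) f := by
  intro x a hx
  obtain ⟨j, rfl⟩ := Fin.exists_succAbove_eq ((isSome_iff_ne_of_pDom_eq hd x).mp (by simp [hx]))
  rw [apply_succAbove_eq_some hinj hop hd hi, Option.some_inj] at hx
  rw [Fin.completion_succAbove, hx]

theorem eq_of_extendsTo_of_pDom_eq (hd : pDom f = Finset.univ.erase d)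
    {σ τ : Equiv.Perm (Fin (m + 1))} (hσ : extendsTo σ f) (hτ : extendsTo τ f) : σ = τ :=
  Equiv.Perm.eq_of_forall_ne_apply_eq d fun x hx => by
    obtain ⟨a, ha⟩ := Option.isSome_iff_exists.mp ((isSome_iff_ne_of_pDom_eq hd x).mpr hx)
    rw [hσ x a ha, hτ x a ha]

end RankOneBelow

theorem stmt0_general {n : ℕ} (f : PT n) (hinj : pInj f) (hop : orderPres f)
    (d i : Fin n) (hd : pDom f = Finset.univ.erase d) (hi : pIm f = Finset.univ.erase i) :
    (∃! σ : Equiv.Perm (Fin n), extendsTo σ f) ∧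
      ∀ σ : Equiv.Perm (Fin n), extendsTo σ f →
        (σ ∈ alternatingGroup (Fin n) ↔ d.val % 2 = i.val % 2) := by
  obtain ⟨m, rfl⟩ := Nat.exists_eq_add_one_of_ne_zero d.pos.ne'
  have hext := extendsTo_completion hinj hop hd hi
  have huniq σ (hσ : extendsTo σ f) := eq_of_extendsTo_of_pDom_eq hd hσ hext
  refine ⟨⟨_, hext, huniq⟩, fun σ hσ => ?_⟩
  rw [huniq σ hσ]
  exact Fin.completion_mem_alternatingGroup_iff d i

/-- An order-preserving partial injection of rank `n-1` extends to a unique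
permutation, which is even iff the missing domain and image elements have the same parity. -/
theorem stmt0 {n : ℕ} (hn : 2 ≤ n) (f : PT n) (hinj : pInj f) (hop : orderPres f)
    (d i : Fin n) (hd : pDom f = Finset.univ.erase d) (hi : pIm f = Finset.univ.erase i) :
    (∃! σ : Equiv.Perm (Fin n), extendsTo σ f) ∧
      ∀ σ : Equiv.Perm (Fin n), extendsTo σ f →
        (σ ∈ alternatingGroup (Fin n) ↔ d.val % 2 = i.val % 2) :=
  stmt0_general f hinj hop d i hd hi
end

section
/- The cardinality of the monoid AO_n of order-preserving partial injections on {1,...,n} lying in the alternating inverse monoid equals C(2n,n) − ⌊n²/2⌋. -/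
/-!
An order-preserving partial injection is determined by its domain and its image, and these can
be any two subsets of the same size, so `|POI_n| = ∑ₖ C(n,k)² = C(2n,n)`. An element of `POI_n`
of rank at most `n - 2` lies in `AI_n` by definition, and the only one of rank `n` is the
identity. One of rank `n - 1` misses a point `i` of the domain and a point `j` of the image; its
unique completion is `(cycleRange j)⁻¹ ∘ cycleRange i`, of sign `(-1)^(i+j)`. So the elements
of `POI_n` outside `AI_n` correspond to the pairs `(i, j)` with `i + j` odd, and there are
`2 ⌈n/2⌉ ⌊n/2⌋ = ⌊n²/2⌋` of those.
-/

open Finset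

lemma Finset.exists_eq_univ_erase_of_card_add_one {α : Type*} [Fintype α] [DecidableEq α]
    {s : Finset α} (hs : #s + 1 = Fintype.card α) : ∃ a, s = univ.erase a := by
  obtain ⟨a, ha⟩ := card_eq_one.1 (by rw [card_compl]; omega : #sᶜ = 1)
  exact ⟨a, by rw [← compl_singleton, ← ha, compl_compl]⟩

lemma Finset.card_filter_card_eq_card (α : Type*) [Fintype α] :
    #{p : Finset α × Finset α | #p.1 = #p.2} =
      (2 * Fintype.card α).choose (Fintype.card α) := by
  rw [← Nat.sum_range_choose_sq, card_eq_sum_card_fiberwise (f := fun p => #p.1)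
    (t := range (Fintype.card α + 1)) fun p _ => mem_range_succ_iff.2 (card_le_univ p.1)]
  refine sum_congr rfl fun k _ => ?_
  rw [sq, ← card_univ (α := α), ← card_powersetCard, ← card_product]
  congr 1
  ext p
  simp only [mem_filter, mem_univ, true_and, mem_product, mem_powersetCard_univ]
  constructor
  · rintro ⟨h, rfl⟩
    exact ⟨rfl, h.symm⟩
  · rintro ⟨h1, h2⟩
    exact ⟨h1.trans h2.symm, h1⟩

lemma Fin.card_filter_odd_val (n : ℕ) : #{i : Fin n | Odd (i : ℕ)} = n / 2 := by
  induction n with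
  | zero => simp
  | succ n ih =>
    have hsplit := card_filter_add_card_filter_not (s := (univ : Finset (Fin n)))
      (fun i => Odd (i : ℕ))
    simp only [Fin.card_filter_univ_succ, Fin.val_zero, Fin.val_succ, Nat.odd_add_one,
      Nat.not_odd_zero, if_false, card_univ, Fintype.card_fin] at hsplit ⊢
    omega

lemma Fin.card_filter_odd_val_add_val (n : ℕ) :
    #{p : Fin n × Fin n | Odd ((p.1 : ℕ) + p.2)} = n ^ 2 / 2 := by
  set O : Finset (Fin n) := {i | Odd (i : ℕ)}
  set E : Finset (Fin n) := {i | ¬Odd (i : ℕ)}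
  have hsplit :
      ({p : Fin n × Fin n | Odd ((p.1 : ℕ) + p.2)} : Finset _) = O ×ˢ E ∪ E ×ˢ O := by
    ext p
    simp only [O, E, mem_filter, mem_univ, true_and, mem_union, mem_product, Nat.odd_add',
      ← Nat.not_odd_iff_even]
    tauto
  have hdisj : Disjoint (O ×ˢ E) (E ×ˢ O) := disjoint_left.2 fun p hp hq =>
    (mem_filter.1 (mem_product.1 hq).1).2 (mem_filter.1 (mem_product.1 hp).1).2
  have hO : #O = n / 2 := card_filter_odd_val n
  have hE : #E = n - n / 2 := by
    have hOE : #O + #E = n := by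
      simpa [O, E] using card_filter_add_card_filter_not (s := (univ : Finset (Fin n))) (Odd ·.val)
    omega
  rw [hsplit, card_union_of_disjoint hdisj, card_product, card_product, hO, hE]
  obtain ⟨k, rfl | rfl⟩ := Nat.even_or_odd' n
  · rw [show 2 * k / 2 = k by omega, show 2 * k - k = k by omega,
      show (2 * k) ^ 2 = 2 * (2 * k * k) by ring, Nat.mul_div_cancel_left _ two_pos]
    ring
  · rw [show (2 * k + 1) / 2 = k by omega, show 2 * k + 1 - k = k + 1 by omega,
      show (2 * k + 1) ^ 2 = 2 * (2 * k * (k + 1)) + 1 by ring,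
      show (2 * (2 * k * (k + 1)) + 1) / 2 = 2 * k * (k + 1) by omega]
    ring

/-- The permutation sending `i` to `j` and the other points increasingly onto the other
points. -/
def slidePerm {n : ℕ} (i j : Fin n) : Equiv.Perm (Fin n) :=
  i.cycleRange.trans j.cycleRange.symm

lemma sign_slidePerm {n : ℕ} (i j : Fin n) :
    Equiv.Perm.sign (slidePerm i j) = (-1) ^ ((i : ℕ) + j) := by
  rw [slidePerm, Equiv.Perm.sign_trans, Equiv.Perm.sign_symm, Fin.sign_cycleRange,
    Fin.sign_cycleRange, pow_add, mul_comm]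

lemma slidePerm_self {n : ℕ} [NeZero n] (i j : Fin n) : slidePerm i j i = j := by
  simp [slidePerm]

lemma slidePerm_succAbove {n : ℕ} (i j : Fin (n + 1)) (k : Fin n) :
    slidePerm i j (i.succAbove k) = j.succAbove k := by
  simp [slidePerm]

lemma strictMonoOn_slidePerm {n : ℕ} (i j : Fin (n + 1)) :
    StrictMonoOn (slidePerm i j) {i}ᶜ := by
  rintro x hx y hy hxy
  obtain ⟨x, rfl⟩ := Fin.exists_succAbove_eq hx
  obtain ⟨y, rfl⟩ := Fin.exists_succAbove_eq hy
  simpa [slidePerm_succAbove] using hxy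

section PartialInjections

variable {n : ℕ} {f g : PT n}

lemma mem_pDom {x : Fin n} : x ∈ pDom f ↔ ∃ a, f x = some a := by
  simp [pDom, Option.isSome_iff_exists]

lemma notMem_pDom {x : Fin n} : x ∉ pDom f ↔ f x = none := by
  simp [pDom]

lemma mem_pIm {b : Fin n} : b ∈ pIm f ↔ ∃ x, f x = some b := by
  simp [pIm]

lemma card_pIm (hf : pInj f) : #(pIm f) = prank f := by
  refine card_bij (fun b hb => (mem_pIm.1 hb).choose) (fun b hb => ?_) (fun b hb c hc hbc => ?_)
    (fun x hx => ?_)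
  · exact mem_pDom.2 ⟨b, (mem_pIm.1 hb).choose_spec⟩
  · have hb := (mem_pIm.1 hb).choose_spec
    rw [hbc, (mem_pIm.1 hc).choose_spec] at hb
    exact (Option.some_inj.1 hb).symm
  · obtain ⟨a, ha⟩ := mem_pDom.1 hx
    have hxa : a ∈ pIm f := mem_pIm.2 ⟨x, ha⟩
    exact ⟨a, hxa, hf _ _ a (mem_pIm.1 hxa).choose_spec ha⟩

lemma lt_of_orderPres (hf : orderPres f) (hi : pInj f) {x y a b : Fin n} (hx : f x = some a)
    (hy : f y = some b) (hxy : x < y) : a < b :=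
  (hf x y a b hx hy hxy.le).lt_of_ne fun hab => hxy.ne (hi x y a hx (hab ▸ hy))

lemma apply_orderEmbOfFin (hf : orderPres f) (hi : pInj f) {A B : Finset (Fin n)} {k : ℕ}
    (hA : pDom f = A) (hB : pIm f = B) (hAk : #A = k) (hBk : #B = k) (i : Fin k) :
    f (A.orderEmbOfFin hAk i) = some (B.orderEmbOfFin hBk i) := by
  have hdom (i : Fin k) : ∃ a, f (A.orderEmbOfFin hAk i) = some a :=
    mem_pDom.1 (hA ▸ A.orderEmbOfFin_mem hAk i)
  choose φ hφ using hdom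
  have hφB : φ = B.orderEmbOfFin hBk :=
    orderEmbOfFin_unique hBk (fun i => hB ▸ mem_pIm.2 ⟨_, hφ i⟩)
      fun i j hij => lt_of_orderPres hf hi (hφ i) (hφ j) ((A.orderEmbOfFin hAk).strictMono hij)
  rw [hφ, hφB]

lemma eq_of_pDom_eq_of_pIm_eq (hf : orderPres f) (hfi : pInj f) (hg : orderPres g)
    (hgi : pInj g) (hd : pDom f = pDom g) (him : pIm f = pIm g) : f = g := by
  funext x
  by_cases hx : x ∈ pDom f
  · obtain ⟨i, rfl⟩ : x ∈ Set.range ((pDom f).orderEmbOfFin rfl) := by simpa using hx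
    have hk : #(pIm f) = #(pDom f) := card_pIm hfi
    rw [apply_orderEmbOfFin hf hfi rfl rfl rfl hk, apply_orderEmbOfFin hg hgi hd.symm him.symm]
  · have hgx : x ∉ pDom g := hd ▸ hx
    rw [notMem_pDom.1 hx, notMem_pDom.1 hgx]

def ofOrderIso {A B : Finset (Fin n)} (e : A ≃o B) : PT n :=
  fun x => if hx : x ∈ A then some (e ⟨x, hx⟩) else none

section OfOrderIso

variable {A B : Finset (Fin n)} (e : A ≃o B)

lemma ofOrderIso_eq_some {x a : Fin n} :
    ofOrderIso e x = some a ↔ ∃ hx : x ∈ A, (e ⟨x, hx⟩ : Fin n) = a := by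
  unfold ofOrderIso
  split_ifs with hx <;> simp [hx]

lemma pDom_ofOrderIso : pDom (ofOrderIso e) = A := by
  ext x
  simp [mem_pDom, ofOrderIso_eq_some]

lemma pIm_ofOrderIso : pIm (ofOrderIso e) = B := by
  ext b
  simp only [mem_pIm, ofOrderIso_eq_some]
  refine ⟨fun ⟨x, hx, hxb⟩ => hxb ▸ (e ⟨x, hx⟩).2, fun hb => ?_⟩
  exact ⟨e.symm ⟨b, hb⟩, (e.symm ⟨b, hb⟩).2, by simp⟩

lemma orderPres_ofOrderIso : orderPres (ofOrderIso e) := by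
  simp only [orderPres, ofOrderIso_eq_some]
  rintro x y _ _ ⟨hx, rfl⟩ ⟨hy, rfl⟩ hxy
  exact e.monotone (Subtype.mk_le_mk.2 hxy)

lemma pInj_ofOrderIso : pInj (ofOrderIso e) := by
  simp only [pInj, ofOrderIso_eq_some]
  rintro x y _ ⟨hx, rfl⟩ ⟨hy, hxy⟩
  exact congrArg Subtype.val (e.injective (Subtype.ext hxy)).symm

end OfOrderIso

def restrictPerm (σ : Equiv.Perm (Fin n)) (A : Finset (Fin n)) : PT n :=
  fun x => if x ∈ A then some (σ x) else none

section RestrictPerm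

variable (σ : Equiv.Perm (Fin n)) (A : Finset (Fin n))

lemma restrictPerm_eq_some {x a : Fin n} :
    restrictPerm σ A x = some a ↔ x ∈ A ∧ σ x = a := by
  unfold restrictPerm
  split_ifs with hx <;> simp [hx]

lemma pDom_restrictPerm : pDom (restrictPerm σ A) = A := by
  ext x
  simp [mem_pDom, restrictPerm_eq_some]

lemma pIm_restrictPerm : pIm (restrictPerm σ A) = A.map σ.toEmbedding := by
  ext b
  simp only [mem_pIm, restrictPerm_eq_some, mem_map, Equiv.coe_toEmbedding]

lemma pInj_restrictPerm : pInj (restrictPerm σ A) := by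
  simp only [pInj, restrictPerm_eq_some]
  rintro x y _ ⟨-, rfl⟩ ⟨-, hxy⟩
  exact σ.injective hxy.symm

lemma extendsTo_restrictPerm : extendsTo σ (restrictPerm σ A) :=
  fun _ _ h => ((restrictPerm_eq_some σ A).1 h).2

lemma orderPres_restrictPerm (hσ : MonotoneOn σ A) : orderPres (restrictPerm σ A) := by
  simp only [orderPres, restrictPerm_eq_some]
  rintro x y _ _ ⟨hx, rfl⟩ ⟨hy, rfl⟩ hxy
  exact hσ hx hy hxy

end RestrictPerm

lemma extendsTo_unique {i : Fin n} (hd : pDom f = univ.erase i) {σ τ : Equiv.Perm (Fin n)}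
    (hσ : extendsTo σ f) (hτ : extendsTo τ f) : σ = τ := by
  have hagree (x : Fin n) (hx : x ≠ i) : σ x = τ x := by
    obtain ⟨a, ha⟩ := mem_pDom.1 (hd ▸ mem_erase.2 ⟨hx, mem_univ x⟩)
    rw [hσ x a ha, hτ x a ha]
  refine Equiv.ext fun x => ?_
  by_cases hx : x = i
  · subst hx
    by_contra hne
    have hy : τ.symm (σ x) ≠ x := fun h => hne (τ.symm_apply_eq.1 h)
    exact hy (σ.injective ((hagree _ hy).trans (τ.apply_symm_apply _)))
  · exact hagree x hx

def POI (n : ℕ) : Set (PT n) := {f | orderPres f ∧ pInj f}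

lemma AO_subset_POI : AO n ⊆ POI n := fun _ hf => ⟨hf.1, hf.2.1⟩

lemma ncard_POI : (POI n).ncard = (2 * n).choose n :=
  calc (POI n).ncard
      _ = (({p | #p.1 = #p.2} : Finset (Finset (Fin n) × Finset (Fin n))) : Set _).ncard :=
        Set.ncard_congr (fun f _ => (pDom f, pIm f))
          (fun f hf => by simp [card_pIm hf.2, prank])
          (fun f g hf hg hfg => eq_of_pDom_eq_of_pIm_eq hf.1 hf.2 hg.1 hg.2
            (congrArg Prod.fst hfg) (congrArg Prod.snd hfg))
          fun p hp => by
            have hcard : #p.1 = #p.2 := by simpa using hp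
            let e := (p.1.orderIsoOfFin hcard).symm.trans (p.2.orderIsoOfFin rfl)
            exact ⟨ofOrderIso e, ⟨orderPres_ofOrderIso e, pInj_ofOrderIso e⟩,
              by rw [pDom_ofOrderIso, pIm_ofOrderIso]⟩
      _ = (2 * n).choose n := by
        rw [Set.ncard_coe_finset, card_filter_card_eq_card, Fintype.card_fin]

/-- The element of `POI_n` of rank `n - 1` whose domain misses `i` and whose image misses `j`. -/
def corankOne (i j : Fin n) : PT n := restrictPerm (slidePerm i j) (univ.erase i)

lemma pDom_corankOne (i j : Fin n) : pDom (corankOne i j) = univ.erase i :=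
  pDom_restrictPerm _ _

lemma pIm_corankOne [NeZero n] (i j : Fin n) : pIm (corankOne i j) = univ.erase j := by
  rw [corankOne, pIm_restrictPerm, map_erase, map_univ_equiv, Equiv.coe_toEmbedding,
    slidePerm_self]

lemma corankOne_mem_POI (i j : Fin (n + 1)) : corankOne i j ∈ POI (n + 1) :=
  ⟨orderPres_restrictPerm _ _ ((strictMonoOn_slidePerm i j).mono (by simp)).monotoneOn,
    pInj_restrictPerm _ _⟩

lemma corankOne_injective : Function.Injective fun p : Fin n × Fin n => corankOne p.1 p.2 := by
  rintro ⟨i, j⟩ ⟨i', j'⟩ h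
  have : NeZero n := NeZero.of_pos i.pos
  have hd := congrArg pDom h
  have him := congrArg pIm h
  simp only [pDom_corankOne, pIm_corankOne] at hd him
  rw [Prod.mk.injEq, ← erase_inj univ (mem_univ i), ← erase_inj univ (mem_univ j)]
  exact ⟨hd, him⟩

/-- The only completion of `corankOne i j` is `slidePerm i j`. -/
lemma corankOne_mem_AO_iff (i j : Fin n) : corankOne i j ∈ AO n ↔ Even ((i : ℕ) + j) := by
  obtain ⟨m, rfl⟩ : ∃ m, n = m + 1 := Nat.exists_eq_add_one_of_ne_zero i.pos.ne'
  have hrank : prank (corankOne i j) = m := by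
    simp [prank, pDom_corankOne, card_erase_of_mem]
  have hext : extendsTo (slidePerm i j) (corankOne i j) := extendsTo_restrictPerm _ _
  simp only [AO, inAI, Set.mem_ofPred_eq, hrank]
  constructor
  · rintro ⟨-, -, h | ⟨σ, hσ, hσf⟩⟩
    · omega
    · rwa [extendsTo_unique (pDom_corankOne i j) hσf hext, Equiv.Perm.mem_alternatingGroup,
        sign_slidePerm, neg_one_pow_eq_one_iff_even (by decide)] at hσ
  · intro h
    refine ⟨(corankOne_mem_POI i j).1, (corankOne_mem_POI i j).2,
      Or.inr ⟨slidePerm i j, ?_, hext⟩⟩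
    rwa [Equiv.Perm.mem_alternatingGroup, sign_slidePerm, neg_one_pow_eq_one_iff_even (by decide)]

/-- The only element of `POI_n` of full rank is the identity. -/
lemma mem_AO_of_prank_add_one_ne (hf : f ∈ POI n) (hr : prank f + 1 ≠ n) : f ∈ AO n := by
  refine ⟨hf.1, hf.2, ?_⟩
  have hle : prank f ≤ n := by simpa [prank] using card_le_univ (pDom f)
  by_cases hsmall : prank f + 2 ≤ n
  · exact Or.inl hsmall
  have hd : pDom f = univ := eq_univ_of_card _ (by rw [Fintype.card_fin]; change prank f = n; omega)
  have him : pIm f = univ := eq_univ_of_card _ (by rw [Fintype.card_fin, card_pIm hf.2]; omega)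
  have hid : f = restrictPerm 1 univ :=
    eq_of_pDom_eq_of_pIm_eq hf.1 hf.2 (orderPres_restrictPerm _ _ monotoneOn_id)
      (pInj_restrictPerm _ _) (by rw [hd, pDom_restrictPerm])
      (by rw [him, pIm_restrictPerm, map_univ_equiv])
  exact Or.inr ⟨1, one_mem _, hid ▸ extendsTo_restrictPerm _ _⟩

lemma POI_diff_AO :
    POI n \ AO n =
      (fun p : Fin n × Fin n => corankOne p.1 p.2) '' {p | Odd ((p.1 : ℕ) + p.2)} := by
  ext f
  simp only [Set.mem_sdiff, Set.mem_image, Set.mem_ofPred_eq, Prod.exists]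
  constructor
  · rintro ⟨hf, hAO⟩
    have hr : prank f + 1 = n := by_contra fun h => hAO (mem_AO_of_prank_add_one_ne hf h)
    obtain ⟨i, hi⟩ :=
      exists_eq_univ_erase_of_card_add_one (s := pDom f) (by simpa [prank] using hr)
    obtain ⟨j, hj⟩ :=
      exists_eq_univ_erase_of_card_add_one (s := pIm f) (by simpa [card_pIm hf.2] using hr)
    obtain ⟨m, rfl⟩ : ∃ m, n = m + 1 := Nat.exists_eq_add_one_of_ne_zero i.pos.ne'
    have hfij : corankOne i j = f :=
      eq_of_pDom_eq_of_pIm_eq (corankOne_mem_POI i j).1 (corankOne_mem_POI i j).2 hf.1 hf.2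
        (by rw [pDom_corankOne, hi]) (by rw [pIm_corankOne, hj])
    refine ⟨i, j, Nat.not_even_iff_odd.1 fun h => hAO ?_, hfij⟩
    exact hfij ▸ (corankOne_mem_AO_iff i j).2 h
  · rintro ⟨i, j, hij, rfl⟩
    obtain ⟨m, rfl⟩ : ∃ m, n = m + 1 := Nat.exists_eq_add_one_of_ne_zero i.pos.ne'
    exact ⟨corankOne_mem_POI i j,
      fun h => Nat.not_even_iff_odd.2 hij ((corankOne_mem_AO_iff i j).1 h)⟩

end PartialInjections

theorem stmt2_general {n : ℕ} :
    (AO n).ncard = Nat.choose (2 * n) n - n ^ 2 / 2 := by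
  have hbad : (POI n \ AO n).ncard = n ^ 2 / 2 := by
    rw [POI_diff_AO, Set.ncard_image_of_injective _ corankOne_injective,
      ← Fin.card_filter_odd_val_add_val, ← Set.ncard_coe_finset, coe_filter]
    simp
  have hsplit := Set.ncard_sdiff_add_ncard_of_subset (AO_subset_POI (n := n))
  rw [← ncard_POI]
  omega

/-- the cardinality of `AO_n`. -/
theorem stmt2 {n : ℕ} (hn : 2 ≤ n) :
    (AO n).ncard = Nat.choose (2 * n) n - n ^ 2 / 2 :=
  stmt2_general
end

section
/- If α and β are injective partial maps on {1,...,n} with |Dom(α)| = |Dom(β)| = n-1 and the composite αβ also has rank n-1, then the completion of αβ equals the product of the completions of α and β. -/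
theorem Equiv.Perm.eq_of_eqOn_of_card_compl_le_one {α : Type*} [Fintype α] [DecidableEq α]
    {π₁ π₂ : Equiv.Perm α} {s : Finset α} (hs : sᶜ.card ≤ 1) (h : ∀ x ∈ s, π₁ x = π₂ x) :
    π₁ = π₂ := by
  -- `π₂⁻¹ * π₁` moves only points outside `s`, but a nonidentity permutation moves at least two.
  have hsupp : (π₂⁻¹ * π₁).support ⊆ sᶜ := fun x hx => by
    rw [Finset.mem_compl]
    intro hxs
    simp [Equiv.Perm.mem_support, h x hxs] at hx
  have hcard : (π₂⁻¹ * π₁).support.card = 0 := by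
    have := (Finset.card_le_card hsupp).trans hs
    have := Equiv.Perm.card_support_ne_one (π₂⁻¹ * π₁)
    omega
  rw [Finset.card_eq_zero, Equiv.Perm.support_eq_empty_iff, inv_mul_eq_one] at hcard
  exact hcard.symm

theorem card_compl_pDom {n : ℕ} (f : PT n) : (pDom f)ᶜ.card = n - prank f := by
  simp [prank, Finset.card_compl]

theorem extendsTo.apply_eq {n : ℕ} {σ τ : Equiv.Perm (Fin n)} {f : PT n}
    (hσ : extendsTo σ f) (hτ : extendsTo τ f) {x : Fin n} (hx : x ∈ pDom f) : σ x = τ x := by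
  obtain ⟨y, hy⟩ := Option.isSome_iff_exists.mp (Finset.mem_filter.mp hx).2
  rw [hσ x y hy, hτ x y hy]

theorem extendsTo.eq {n : ℕ} {σ τ : Equiv.Perm (Fin n)} {f : PT n}
    (hσ : extendsTo σ f) (hτ : extendsTo τ f) (hf : n ≤ prank f + 1) : σ = τ :=
  Equiv.Perm.eq_of_eqOn_of_card_compl_le_one (by rw [card_compl_pDom]; omega)
    fun _ hx => hσ.apply_eq hτ hx

theorem extendsTo.mul {n : ℕ} {σ τ : Equiv.Perm (Fin n)} {a b : PT n}
    (hσ : extendsTo σ a) (hτ : extendsTo τ b) : extendsTo (σ.trans τ) (a * b) := fun x c hc => by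
  obtain ⟨y, hy, hyc⟩ := Option.bind_eq_some_iff.mp hc
  rw [Equiv.trans_apply, hσ x y hy, hτ y c hyc]

theorem stmt4_general {n : ℕ} (a b : PT n)
    (hrab : prank (a * b) = n - 1)
    (σ τ ρ : Equiv.Perm (Fin n)) (hσ : extendsTo σ a) (hτ : extendsTo τ b)
    (hρ : extendsTo ρ (a * b)) : ρ = σ.trans τ :=
  hρ.eq (hσ.mul hτ) (by omega)

/-- the completion of a rank-`n-1` composite is the composite of completions. -/
theorem stmt4 {n : ℕ} (hn : 2 ≤ n) (a b : PT n) (hinja : pInj a) (hinjb : pInj b)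
    (hra : prank a = n - 1) (hrb : prank b = n - 1) (hrab : prank (a * b) = n - 1)
    (σ τ ρ : Equiv.Perm (Fin n)) (hσ : extendsTo σ a) (hτ : extendsTo τ b)
    (hρ : extendsTo ρ (a * b)) : ρ = σ.trans τ :=
  stmt4_general a b hrab σ τ ρ hσ hτ hρ
end

section
/- Let α be an injective partial map on {1,...,n} of rank n-1 that is order-reversing and not order-preserving. Then the completion of α is an even permutation if and only if: when n ≡ 0 or 3 (mod 4), d(α) and i(α) have distinct parities; when n ≡ 1 or 2 (mod 4), d(α) and i(α) have the same parity. -/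
open Equiv Equiv.Perm Fin

/-- Decomposition of a permutation determined by `σ d = i` and
`σ (d.succAbove k) = i.succAbove k.rev`. -/
lemma perm_decomp {m : ℕ} (d i : Fin (m + 1)) (σ : Equiv.Perm (Fin (m + 1)))
    (H2 : σ d = i) (H1 : ∀ k : Fin m, σ (d.succAbove k) = i.succAbove k.rev) :
    σ = (Fin.cycleRange i)⁻¹ * Equiv.Perm.decomposeFin.symm (0, Fin.revPerm) *
      Fin.cycleRange d := by
  ext x
  rcases eq_or_ne x d with rfl | hx
  · simp [Equiv.Perm.mul_apply, Fin.cycleRange_self, H2, Equiv.Perm.inv_def,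
      Equiv.Perm.decomposeFin_symm_apply_zero]
  · obtain ⟨k, rfl⟩ := Fin.exists_succAbove_eq hx
    simp [Equiv.Perm.mul_apply, Fin.cycleRange_succAbove, H1, Equiv.Perm.inv_def,
      Equiv.Perm.decomposeFin_symm_apply_succ]

lemma sign_revPerm' : ∀ m : ℕ,
    Equiv.Perm.sign (Fin.revPerm : Equiv.Perm (Fin m)) = (-1) ^ (m * (m - 1) / 2)
  | 0 => by
    have : (Fin.revPerm : Equiv.Perm (Fin 0)) = 1 := by ext x; exact x.elim0
    simp [this]
  | (m + 1) => by
    have hd : (Fin.revPerm : Equiv.Perm (Fin (m + 1))) =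
        (Fin.cycleRange ((0 : Fin (m+1)).rev))⁻¹ *
          Equiv.Perm.decomposeFin.symm (0, Fin.revPerm) * Fin.cycleRange 0 := by
      apply perm_decomp
      · rfl
      · intro k
        rw [Fin.revPerm_apply, Fin.rev_succAbove]
    rw [hd]
    rw [map_mul, map_mul, map_inv, Fin.sign_cycleRange, Fin.sign_cycleRange,
      Equiv.Perm.decomposeFin.symm_sign, if_pos rfl, one_mul, sign_revPerm' m]
    simp only [Fin.val_zero, pow_zero, mul_one, Fin.val_rev]
    have e1 : m + 1 - (0 + 1) = m := by omega
    rw [e1, ← inv_pow, inv_neg_one, ← pow_add]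
    congr 1
    have := Nat.triangle_succ m
    simp only [Nat.add_sub_cancel] at this
    omega


lemma tri_parity (m : ℕ) : m*(m-1)/2 % 2 = (m % 4)*(m % 4 - 1)/2 % 2 := by
  induction m using Nat.strong_induction_on with
  | _ m ih =>
    rcases Nat.lt_or_ge m 4 with h | h
    · rw [Nat.mod_eq_of_lt h]
    · obtain ⟨k, rfl⟩ : ∃ k, m = k + 4 := ⟨m - 4, by omega⟩
      have ihk := ih k (by omega)
      have hmod : (k + 4) % 4 = k % 4 := by omega
      rw [hmod, ← ihk]
      have hexp : (k+4)*((k+4)-1) = k*(k-1) + (8*k+12) := by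
        cases k with
        | zero => norm_num
        | succ j =>
          simp only [Nat.succ_sub_one, Nat.add_sub_cancel]
          ring
      have hev : 2 ∣ k*(k-1) := (Nat.even_mul_pred_self k).two_dvd
      omega

/-- parity criterion for the completion of a strictly order-reversing
rank-`n-1` partial injection to be even, depending on `n mod 4`. -/
theorem stmt5 {n : ℕ} (hn : 2 ≤ n) (f : PT n) (hinj : pInj f) (hrev : orderRev f)
    (hnp : ¬ orderPres f) (d i : Fin n)
    (hd : pDom f = Finset.univ.erase d) (hi : pIm f = Finset.univ.erase i)
    (σ : Equiv.Perm (Fin n)) (hσ : extendsTo σ f) :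
    (σ ∈ alternatingGroup (Fin n)) ↔
      (if n % 4 = 0 ∨ n % 4 = 3 then d.val % 2 ≠ i.val % 2 else d.val % 2 = i.val % 2) := by
  obtain ⟨m, rfl⟩ : ∃ m, n = m + 1 := ⟨n - 1, by omega⟩
  have hA : ∀ x : Fin (m+1), x ≠ d → f x = some (σ x) ∧ σ x ≠ i := by
    intro x hx
    have hxd : x ∈ pDom f := by
      rw [hd]; exact Finset.mem_erase.mpr ⟨hx, Finset.mem_univ x⟩
    rw [pDom, Finset.mem_filter] at hxd
    obtain ⟨a, ha⟩ := Option.isSome_iff_exists.mp hxd.2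
    have hsa : σ x = a := hσ x a ha
    have hai : a ∈ pIm f := by
      rw [pIm, Finset.mem_filter]; exact ⟨Finset.mem_univ a, ⟨x, ha⟩⟩
    rw [hi, Finset.mem_erase] at hai
    exact ⟨by rw [hsa]; exact ha, by rw [hsa]; exact hai.1⟩
  have H2 : σ d = i := by
    obtain ⟨y, hy⟩ := σ.surjective i
    rcases eq_or_ne y d with rfl | hyd
    · exact hy
    · exact absurd hy (hA y hyd).2
  set G : Fin m → Fin (m+1) := fun k => σ (d.succAbove k.rev) with hG
  have hGmono : StrictMono G := by
    intro k l hkl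
    have h1 : d.succAbove l.rev < d.succAbove k.rev :=
      Fin.strictMono_succAbove d (Fin.rev_lt_rev.mpr hkl)
    have fk := hA (d.succAbove k.rev) (Fin.succAbove_ne d _)
    have fl := hA (d.succAbove l.rev) (Fin.succAbove_ne d _)
    have hle : G k ≤ G l := hrev _ _ _ _ fl.1 fk.1 h1.le
    refine lt_of_le_of_ne hle fun h => ?_
    have h2 := σ.injective h
    have h3 : k.rev = l.rev := Fin.succAbove_right_injective h2
    exact hkl.ne (by simpa using congrArg Fin.rev h3)
  have hrange : Set.range G = Set.range (i.succAbove) := by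
    have hsub : Set.range G ⊆ Set.range (i.succAbove) := by
      rw [Fin.range_succAbove]
      rintro _ ⟨k, rfl⟩
      exact (hA _ (Fin.succAbove_ne d _)).2
    refine Set.eq_of_subset_of_ncard_le hsub ?_ (Set.toFinite _)
    rw [← Set.image_univ, ← Set.image_univ,
      Set.ncard_image_of_injective _ (Fin.succAbove_right_injective),
      Set.ncard_image_of_injective _ hGmono.injective]
  have hwf : WellFoundedLT (Fin m) := Finite.to_wellFoundedLT
  have hGeq : G = i.succAbove :=
    (hGmono.range_inj (Fin.strictMono_succAbove i)).mp hrange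
  have H1 : ∀ k : Fin m, σ (d.succAbove k) = i.succAbove k.rev := by
    intro k
    have := congrFun hGeq k.rev
    simpa [hG, Fin.rev_rev] using this
  have hdecomp := perm_decomp d i σ H2 H1
  rw [Equiv.Perm.mem_alternatingGroup, hdecomp, map_mul, map_mul, map_inv,
    Fin.sign_cycleRange, Fin.sign_cycleRange, Equiv.Perm.decomposeFin.symm_sign,
    if_pos rfl, one_mul, sign_revPerm', ← inv_pow, inv_neg_one, ← pow_add, ← pow_add]
  rw [neg_one_pow_eq_one_iff_even (by decide : (-1 : ℤˣ) ≠ 1), Nat.even_iff]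
  have ht := tri_parity m
  have hc : m % 4 = 0 ∨ m % 4 = 1 ∨ m % 4 = 2 ∨ m % 4 = 3 := by omega
  rcases hc with hc | hc | hc | hc <;> rw [hc] at ht <;> norm_num at ht <;>
    split_ifs with hif <;> omega
end

section
/- Let M be a finite H-trivial inverse monoid (which necessarily has a zero element 0). If ρ is a congruence of M such that for every idempotent e, the existence of an idempotent f with f < e (in the natural order) and e ρ f implies e ρ 0, then ρ is a Rees congruence, i.e., ρ equals the congruence identifying all elements of some ideal I and nothing else. -/
/-- Green's `H`-relation on a monoid. -/
def greenH {M : Type*} [Monoid M] (a b : M) : Prop :=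
  ((∃ u, a = u * b) ∧ (∃ u, b = u * a)) ∧ ((∃ v, a = b * v) ∧ (∃ v, b = a * v))

private lemma pow_shift' {M : Type*} [Monoid M] (c d : M) (n : ℕ) :
    (c * d) ^ (n + 1) = c * (d * c) ^ n * d := by
  induction n with
  | zero => simp
  | succ n ih =>
    rw [pow_succ, ih, pow_succ]
    simp only [mul_assoc]

private lemma pow_stab' {M : Type*} [Monoid M] [Fintype M]
    (htriv : ∀ a b : M, greenH a b → a = b) (x : M) :
    ∃ k, 1 ≤ k ∧ x ^ (k + 1) = x ^ k := by
  have key : ∀ i j : ℕ, i < j → x ^ i = x ^ j → ∃ k, 1 ≤ k ∧ x ^ (k + 1) = x ^ k := by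
    intro i j hij hp
    set p := j - i with hpdef
    have hp1 : 1 ≤ p := by omega
    have periodic : ∀ m, i ≤ m → x ^ (m + p) = x ^ m := by
      intro m hm
      rw [show m + p = (m - i) + j by omega, pow_add, ← hp, ← pow_add,
        show m - i + i = m by omega]
    set k := i + 1 with hk
    have h1 : x ^ (k + 1) = x * x ^ k := pow_succ' x k
    have h1' : x ^ (k + 1) = x ^ k * x := pow_succ x k
    have h2 : x ^ k = x ^ (p - 1) * x ^ (k + 1) := by
      rw [← pow_add, show p - 1 + (k + 1) = k + p by omega, periodic k (by omega)]
    have h2' : x ^ k = x ^ (k + 1) * x ^ (p - 1) := by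
      rw [← pow_add, show k + 1 + (p - 1) = k + p by omega, periodic k (by omega)]
    exact ⟨k, by omega, htriv _ _ ⟨⟨⟨x, h1⟩, ⟨x ^ (p - 1), h2⟩⟩, ⟨⟨x, h1'⟩, ⟨x ^ (p - 1), h2'⟩⟩⟩⟩
  obtain ⟨i, j, hij, hp⟩ := Finite.exists_ne_map_eq_of_infinite (fun n : ℕ => x ^ n)
  rcases lt_or_gt_of_ne hij with h | h
  · exact key i j h hp
  · exact key j i h hp.symm

/-- in a finite H-trivial inverse monoid (with zero `z`), a congruence
collapsing any idempotent with a strictly smaller one down to `z` is a Rees congruence. -/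
theorem stmt12 {M : Type*} [Monoid M] [Fintype M]
    (hinv : ∀ a : M, ∃! b : M, a * b * a = a ∧ b * a * b = b)
    (htriv : ∀ a b : M, greenH a b → a = b)
    (z : M) (hz : ∀ a : M, z * a = z ∧ a * z = z)
    (ρ : Con M)
    (hρ : ∀ e f : M, e * e = e → f * f = f → e * f = f → f * e = f → f ≠ e → ρ e f → ρ e z) :
    ∃ I : Set M, (∀ a ∈ I, ∀ u v : M, u * a * v ∈ I) ∧
      (∀ a b : M, ρ a b ↔ (a = b ∨ (a ∈ I ∧ b ∈ I))) := by
  classical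
  choose inv hi using fun a => (hinv a).exists
  have huniq : ∀ a b : M, a * b * a = a → b * a * b = b → b = inv a := fun a b h1 h2 =>
    (hinv a).unique ⟨h1, h2⟩ (hi a)
  have hi1 : ∀ a : M, a * inv a * a = a := fun a => (hi a).1
  have hi2 : ∀ a : M, inv a * a * inv a = inv a := fun a => (hi a).2
  have hide : ∀ e : M, e * e = e → inv e = e := fun e he =>
    (huniq e e (by rw [he, he]) (by rw [he, he])).symm
  -- product of idempotents is idempotent
  have hprod : ∀ e f : M, e * e = e → f * f = f → (e * f) * (e * f) = e * f := by
    intro e f he hf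
    set x := inv (e * f) with hxdef
    have heE : ∀ y : M, e * (e * y) = e * y := fun y => by rw [← mul_assoc, he]
    have hfE : ∀ y : M, f * (f * y) = f * y := fun y => by rw [← mul_assoc, hf]
    have A : (e * f) * x * (e * f) = e * f := hi1 _
    have B : x * (e * f) * x = x := hi2 _
    have A' : e * (f * (x * (e * f))) = e * f := by simpa only [mul_assoc] using A
    have Bg : ∀ y : M, x * (e * (f * (x * y))) = x * y := by
      intro y
      have := congrArg (· * y) B
      simpa only [mul_assoc] using this
    have step1 : f * x * e = x := by
      apply huniq
      · show (e * f) * (f * x * e) * (e * f) = e * f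
        simp only [mul_assoc]
        rw [hfE, heE]
        exact A'
      · show (f * x * e) * (e * f) * (f * x * e) = f * x * e
        simp only [mul_assoc]
        rw [heE, hfE, Bg]
    have step1' : f * (x * e) = x := by simpa only [mul_assoc] using step1
    have step2 : x * x = x := by
      conv_lhs => rw [← step1]
      simp only [mul_assoc]
      rw [Bg]
      exact step1'
    have step3 : e * f = x := by
      rw [huniq x (e * f) B A, hide x step2]
    rw [step3]
    exact step2
  -- idempotents commute
  have hcomm : ∀ e f : M, e * e = e → f * f = f → e * f = f * e := by
    intro e f he hf
    have hEF := hprod e f he hf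
    have hFE := hprod f e hf he
    have heE : ∀ y : M, e * (e * y) = e * y := fun y => by rw [← mul_assoc, he]
    have hfE : ∀ y : M, f * (f * y) = f * y := fun y => by rw [← mul_assoc, hf]
    have hEF' : e * (f * (e * f)) = e * f := by simpa only [mul_assoc] using hEF
    have hFE' : f * (e * (f * e)) = f * e := by simpa only [mul_assoc] using hFE
    have c1 : (e * f) * (f * e) * (e * f) = e * f := by
      simp only [mul_assoc]
      rw [hfE, heE]
      exact hEF'
    have c2 : (f * e) * (e * f) * (f * e) = f * e := by
      simp only [mul_assoc]
      rw [heE, hfE]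
      exact hFE'
    have := huniq (e * f) (f * e) c1 c2
    rw [this, hide (e * f) hEF]
  -- ρ-related distinct idempotents collapse to z
  have key_idem : ∀ e f : M, e * e = e → f * f = f → ρ e f → e ≠ f → ρ e z := by
    intro e f he hf hef hne
    have hEF := hprod e f he hf
    have hCo := hcomm e f he hf
    by_cases h : e * f = e
    · have hfe : f * e = e := by rw [← hCo]; exact h
      have hρfe : ρ f e := ρ.symm hef
      have : ρ f z := hρ f e hf he hfe h hne hρfe
      exact ρ.trans hef this
    · have h1 : e * (e * f) = e * f := by rw [← mul_assoc, he]
      have h2 : (e * f) * e = e * f := by rw [hCo, mul_assoc, he]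
      have hρef : ρ e (e * f) := by
        have := ρ.mul (ρ.refl e) hef
        rwa [he] at this
      exact hρ e (e * f) he hEF h1 h2 h hρef
  have idem_pow : ∀ (g : M), g * g = g → ∀ n : ℕ, g ^ (n + 1) = g := by
    intro g hg n
    induction n with
    | zero => exact pow_one g
    | succ n ih => rw [pow_succ, ih, hg]
  -- the main step: relate an idempotent to a power of a related element
  have step : ∀ g x : M, g * g = g → ρ g x → (ρ g z ∨ ∃ k, 1 ≤ k ∧ x ^ k = g) := by
    intro g x hg hgx
    obtain ⟨k, hk1, hstab⟩ := pow_stab' htriv x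
    have hm : ∀ m, x ^ (k + m) = x ^ k := by
      intro m
      induction m with
      | zero => rfl
      | succ m ih => rw [← add_assoc, pow_succ, ih, ← pow_succ, hstab]
    have hxk : (x ^ k) * (x ^ k) = x ^ k := by rw [← pow_add, hm]
    have hgk : ρ g (x ^ k) := by
      have := ρ.pow k hgx
      rwa [show g ^ k = g by
        obtain ⟨n, rfl⟩ : ∃ n, k = n + 1 := ⟨k - 1, by omega⟩
        exact idem_pow g hg n] at this
    by_cases hgeq : g = x ^ k
    · exact Or.inr ⟨k, hk1, hgeq.symm⟩
    · exact Or.inl (key_idem g (x ^ k) hg hxk hgk hgeq)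
  -- main lemma: ρ-related distinct elements collapse to z
  have main : ∀ a b : M, ρ a b → a ≠ b → ρ a z := by
    intro a b hab hne
    set a' := inv a with ha'
    set b' := inv b with hb'
    have haa : a * a' * a = a := hi1 a
    have hbb : b * b' * b = b := hi1 b
    have hg1 : (a' * a) * (a' * a) = a' * a := by
      rw [← mul_assoc, hi2]
    have hg2 : (a * a') * (a * a') = a * a' := by
      rw [← mul_assoc, hi1]
    have hg3 : (b' * b) * (b' * b) = b' * b := by
      rw [← mul_assoc, hi2]
    have hg4 : (b * b') * (b * b') = b * b' := by
      rw [← mul_assoc, hi1]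
    have hza : ρ (a' * a) z → ρ a z := by
      intro h
      have := ρ.mul (ρ.refl a) h
      rwa [← mul_assoc, haa, (hz a).2] at this
    have hza' : ρ (a * a') z → ρ a z := by
      intro h
      have := ρ.mul h (ρ.refl a)
      rwa [haa, (hz a).1] at this
    have hzb : ρ (b' * b) z → ρ a z := by
      intro h
      have := ρ.mul (ρ.refl b) h
      rw [← mul_assoc, hbb, (hz b).2] at this
      exact ρ.trans hab this
    have hzb' : ρ (b * b') z → ρ a z := by
      intro h
      have := ρ.mul h (ρ.refl b)
      rw [hbb, (hz b).1] at this
      exact ρ.trans hab this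
    rcases step (a' * a) (a' * b) hg1 (ρ.mul (ρ.refl a') hab) with h | ⟨k1, hk1, e1⟩
    · exact hza h
    rcases step (a * a') (b * a') hg2 (ρ.mul hab (ρ.refl a')) with h | ⟨k2, hk2, e2⟩
    · exact hza' h
    rcases step (b' * b) (b' * a) hg3 (ρ.mul (ρ.refl b') (ρ.symm hab)) with h | ⟨k3, hk3, e3⟩
    · exact hzb h
    rcases step (b * b') (a * b') hg4 (ρ.mul (ρ.symm hab) (ρ.refl b')) with h | ⟨k4, hk4, e4⟩
    · exact hzb' h
    -- now a H b, contradiction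
    exfalso
    apply hne
    apply htriv
    obtain ⟨n2, rfl⟩ : ∃ n, k2 = n + 1 := ⟨k2 - 1, by omega⟩
    obtain ⟨n1, rfl⟩ : ∃ n, k1 = n + 1 := ⟨k1 - 1, by omega⟩
    obtain ⟨n3, rfl⟩ : ∃ n, k3 = n + 1 := ⟨k3 - 1, by omega⟩
    obtain ⟨n4, rfl⟩ : ∃ n, k4 = n + 1 := ⟨k4 - 1, by omega⟩
    refine ⟨⟨⟨a * (a' * b) ^ n1 * a', ?_⟩, ⟨b * (b' * a) ^ n3 * b', ?_⟩⟩,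
      ⟨⟨(a' * b) ^ n2 * (a' * a), ?_⟩, ⟨(b' * a) ^ n4 * (b' * b), ?_⟩⟩⟩
    · symm
      calc a * (a' * b) ^ n1 * a' * b
          = a * ((a' * b) ^ n1 * (a' * b)) := by simp only [mul_assoc]
        _ = a * (a' * b) ^ (n1 + 1) := by rw [← pow_succ]
        _ = a * (a' * a) := by rw [e1]
        _ = a := by rw [← mul_assoc, haa]
    · symm
      calc b * (b' * a) ^ n3 * b' * a
          = b * ((b' * a) ^ n3 * (b' * a)) := by simp only [mul_assoc]
        _ = b * (b' * a) ^ (n3 + 1) := by rw [← pow_succ]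
        _ = b * (b' * b) := by rw [e3]
        _ = b := by rw [← mul_assoc, hbb]
    · symm
      calc b * ((a' * b) ^ n2 * (a' * a))
          = b * (a' * b) ^ n2 * a' * a := by simp only [mul_assoc]
        _ = (b * a') ^ (n2 + 1) * a := by rw [← pow_shift']
        _ = a := by rw [e2, haa]
    · symm
      calc a * ((b' * a) ^ n4 * (b' * b))
          = a * (b' * a) ^ n4 * b' * b := by simp only [mul_assoc]
        _ = (a * b') ^ (n4 + 1) * b := by rw [← pow_shift']
        _ = b := by rw [e4, hbb]
  refine ⟨{c | ρ c z}, ?_, ?_⟩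
  · intro a ha u v
    have := ρ.mul (ρ.mul (ρ.refl u) ha) (ρ.refl v)
    rwa [(hz u).2, (hz v).1] at this
  · intro a b
    constructor
    · intro h
      by_cases hab : a = b
      · exact Or.inl hab
      · exact Or.inr ⟨main a b h hab, main b a (ρ.symm h) (Ne.symm hab)⟩
    · rintro (rfl | ⟨ha, hb⟩)
      · exact ρ.refl a
      · exact ρ.trans ha (ρ.symm hb)
end

section
/- Let M be a finite monoid and J a J-class of M. The relation θ_J defined by a θ_J b iff a = b, or both a, b belong to the ideal A(J) = {x : J_x <_J J}, or a, b ∈ J and a H b, is a congruence of M. -/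
/-- The `≤_J` preorder: `a ∈ M b M`. -/
def jLe {M : Type*} [Monoid M] (a b : M) : Prop := ∃ u v, a = u * b * v

/-- The relation `θ_J` for `J` the `J`-class of `a0`: equality, or both in
`A(J) = {x : J_x <_J J}`, or both in `J` and `H`-related. -/
def thetaRel {M : Type*} [Monoid M] (a0 x y : M) : Prop :=
  x = y ∨ (jLe x a0 ∧ ¬ jLe a0 x ∧ jLe y a0 ∧ ¬ jLe a0 y) ∨
    (jLe x a0 ∧ jLe a0 x ∧ jLe y a0 ∧ jLe a0 y ∧ greenH x y)

section Aux

variable {M : Type*} [Monoid M]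

lemma exists_idem_pow [Fintype M] (a : M) : ∃ m, 1 ≤ m ∧ a ^ m * a ^ m = a ^ m := by
  obtain ⟨i, j, hne, hij⟩ := Finite.exists_ne_map_eq_of_infinite (fun n : ℕ => a ^ n)
  wlog hlt : i < j generalizing i j
  · exact this j i hne.symm hij.symm (hne.lt_or_gt.resolve_left hlt)
  set d := j - i with hd
  have hd1 : 1 ≤ d := by omega
  have key : ∀ n, i ≤ n → a ^ (n + d) = a ^ n := by
    intro n hn
    have e1 : a ^ (n + d) = a ^ (i + d) * a ^ (n - i) := by
      rw [← pow_add]; congr 1; omega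
    rw [e1]
    have e2 : (i + d) = j := by omega
    rw [e2, ← hij, ← pow_add]; congr 1; omega
  have key2 : ∀ k n, i ≤ n → a ^ (n + k * d) = a ^ n := by
    intro k
    induction k with
    | zero => simp
    | succ k ih =>
      intro n hn
      have e : n + (k + 1) * d = (n + d) + k * d := by ring
      rw [e, ih _ (by omega), key _ hn]
  refine ⟨(i + 1) * d, by nlinarith, ?_⟩
  rw [← pow_add]
  exact key2 (i + 1) ((i + 1) * d) (by nlinarith)

/-- Stability (left). -/
lemma stab_left [Fintype M] {a b u : M} (h : a = u * b) (h2 : ∃ p q, b = p * a * q) :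
    ∃ w, b = w * a := by
  obtain ⟨p, q, hb⟩ := h2
  have hb' : b = (p * u) * b * q := by
    conv_lhs => rw [hb, h]
    simp [mul_assoc]
  set s := p * u with hs
  have iter : ∀ k, b = s ^ k * b * q ^ k := by
    intro k
    induction k with
    | zero => simp
    | succ k ih =>
      calc b = s * b * q := hb'
      _ = s * (s ^ k * b * q ^ k) * q := by rw [← ih]
      _ = s ^ (k + 1) * b * q ^ (k + 1) := by
          rw [pow_succ q, pow_succ' s]; simp [mul_assoc]
  obtain ⟨m, hm1, hme⟩ := exists_idem_pow s
  have h1 : b = s ^ m * b * q ^ m := iter m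
  have h2 : s ^ m * b = b :=
    calc s ^ m * b = s ^ m * (s ^ m * b * q ^ m) := by rw [← h1]
    _ = (s ^ m * s ^ m) * b * q ^ m := by simp [mul_assoc]
    _ = s ^ m * b * q ^ m := by rw [hme]
    _ = b := h1.symm
  refine ⟨s ^ (m - 1) * p, ?_⟩
  have e : s ^ m = s ^ (m - 1) * s := by rw [← pow_succ]; congr 1; omega
  calc b = s ^ m * b := h2.symm
  _ = s ^ (m - 1) * s * b := by rw [← e]
  _ = s ^ (m - 1) * p * (u * b) := by rw [hs]; simp [mul_assoc]
  _ = s ^ (m - 1) * p * a := by rw [← h]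

/-- Stability (right). -/
lemma stab_right [Fintype M] {a b v : M} (h : a = b * v) (h2 : ∃ p q, b = p * a * q) :
    ∃ w, b = a * w := by
  obtain ⟨p, q, hb⟩ := h2
  have hb' : b = p * b * (v * q) := by
    conv_lhs => rw [hb, h]
    simp [mul_assoc]
  set s := v * q with hs
  have iter : ∀ k, b = p ^ k * b * s ^ k := by
    intro k
    induction k with
    | zero => simp
    | succ k ih =>
      calc b = p * b * s := hb'
      _ = p * (p ^ k * b * s ^ k) * s := by rw [← ih]
      _ = p ^ (k + 1) * b * s ^ (k + 1) := by
          rw [pow_succ s, pow_succ' p]; simp [mul_assoc]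
  obtain ⟨m, hm1, hme⟩ := exists_idem_pow s
  have h1 : b = p ^ m * b * s ^ m := iter m
  have h2 : b * s ^ m = b :=
    calc b * s ^ m = (p ^ m * b * s ^ m) * s ^ m := by rw [← h1]
    _ = p ^ m * b * (s ^ m * s ^ m) := by simp [mul_assoc]
    _ = p ^ m * b * s ^ m := by rw [hme]
    _ = b := h1.symm
  refine ⟨q * s ^ (m - 1), ?_⟩
  have e : s ^ m = s * s ^ (m - 1) := by rw [← pow_succ']; congr 1; omega
  calc b = b * s ^ m := h2.symm
  _ = b * (s * s ^ (m - 1)) := by rw [e]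
  _ = (b * v) * (q * s ^ (m - 1)) := by rw [hs]; simp [mul_assoc]
  _ = a * (q * s ^ (m - 1)) := by rw [← h]

end Aux

section Main

variable {M : Type*} [Monoid M]

lemma jLe_refl (a : M) : jLe a a := ⟨1, 1, by simp⟩

lemma jLe_trans {a b c : M} (h1 : jLe a b) (h2 : jLe b c) : jLe a c := by
  obtain ⟨u, v, rfl⟩ := h1
  obtain ⟨p, q, rfl⟩ := h2
  exact ⟨u * p, q * v, by simp [mul_assoc]⟩

lemma jLe_mul_left (c a : M) : jLe (c * a) a := ⟨c, 1, by rw [mul_one]⟩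

lemma jLe_mul_right (a c : M) : jLe (a * c) a := ⟨1, c, by rw [one_mul]⟩

lemma greenH_refl (a : M) : greenH a a :=
  ⟨⟨⟨1, (one_mul a).symm⟩, ⟨1, (one_mul a).symm⟩⟩,
   ⟨⟨1, (mul_one a).symm⟩, ⟨1, (mul_one a).symm⟩⟩⟩

lemma greenH_symm {a b : M} (h : greenH a b) : greenH b a :=
  ⟨⟨h.1.2, h.1.1⟩, ⟨h.2.2, h.2.1⟩⟩

lemma greenH_trans {a b c : M} (h1 : greenH a b) (h2 : greenH b c) : greenH a c := by
  obtain ⟨⟨⟨u1, e1⟩, ⟨u2, e2⟩⟩, ⟨⟨v1, f1⟩, ⟨v2, f2⟩⟩⟩ := h1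
  obtain ⟨⟨⟨u3, e3⟩, ⟨u4, e4⟩⟩, ⟨⟨v3, f3⟩, ⟨v4, f4⟩⟩⟩ := h2
  refine ⟨⟨⟨u1 * u3, ?_⟩, ⟨u4 * u2, ?_⟩⟩, ⟨⟨v3 * v1, ?_⟩, ⟨v2 * v4, ?_⟩⟩⟩
  · rw [e1, e3, mul_assoc]
  · rw [e4, e2, mul_assoc]
  · rw [f1, f3, mul_assoc]
  · rw [f4, f2, mul_assoc]

lemma theta_compat_left [Fintype M] (a0 c x y : M) (h : thetaRel a0 x y) :
    thetaRel a0 (c * x) (c * y) := by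
  rcases h with rfl | ⟨hx, hnx, hy, hny⟩ | ⟨hx, hx0, hy, hy0, hH⟩
  · exact Or.inl rfl
  · refine Or.inr (Or.inl ⟨jLe_trans (jLe_mul_left c x) hx, ?_,
      jLe_trans (jLe_mul_left c y) hy, ?_⟩)
    · exact fun h => hnx (jLe_trans h (jLe_mul_left c x))
    · exact fun h => hny (jLe_trans h (jLe_mul_left c y))
  · obtain ⟨⟨⟨u1, e1⟩, ⟨u2, e2⟩⟩, ⟨⟨v1, f1⟩, ⟨v2, f2⟩⟩⟩ := hH
    -- c*x and c*y are R-related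
    have hR1 : c * x = (c * y) * v1 := by rw [f1, mul_assoc]
    have hR2 : c * y = (c * x) * v2 := by rw [f2, mul_assoc]
    have hcx : jLe (c * x) a0 := jLe_trans (jLe_mul_left c x) hx
    have hcy : jLe (c * y) a0 := jLe_trans (jLe_mul_left c y) hy
    by_cases hc : jLe a0 (c * x)
    · -- stay in the J-class
      have hcy0 : jLe a0 (c * y) := jLe_trans hc ⟨1, v1, by rw [one_mul]; exact hR1⟩
      obtain ⟨w1, hw1⟩ := stab_left (rfl : c * x = c * x) (jLe_trans hx hc)
      obtain ⟨w2, hw2⟩ := stab_left (rfl : c * y = c * y) (jLe_trans hy hcy0)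
      refine Or.inr (Or.inr ⟨hcx, hc, hcy, hcy0, ⟨⟨⟨c * u1 * w2, ?_⟩,
        ⟨c * u2 * w1, ?_⟩⟩, ⟨⟨v1, hR1⟩, ⟨v2, hR2⟩⟩⟩⟩)
      · calc c * x = c * (u1 * y) := by rw [← e1]
        _ = c * (u1 * (w2 * (c * y))) := by rw [← hw2]
        _ = c * u1 * w2 * (c * y) := by simp [mul_assoc]
      · calc c * y = c * (u2 * x) := by rw [← e2]
        _ = c * (u2 * (w1 * (c * x))) := by rw [← hw1]
        _ = c * u2 * w1 * (c * x) := by simp [mul_assoc]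
    · -- fall into the strict ideal
      have hncy : ¬ jLe a0 (c * y) := fun h =>
        hc (jLe_trans h ⟨1, v2, by rw [one_mul]; exact hR2⟩)
      exact Or.inr (Or.inl ⟨hcx, hc, hcy, hncy⟩)

lemma theta_compat_right [Fintype M] (a0 c x y : M) (h : thetaRel a0 x y) :
    thetaRel a0 (x * c) (y * c) := by
  rcases h with rfl | ⟨hx, hnx, hy, hny⟩ | ⟨hx, hx0, hy, hy0, hH⟩
  · exact Or.inl rfl
  · refine Or.inr (Or.inl ⟨jLe_trans (jLe_mul_right x c) hx, ?_,
      jLe_trans (jLe_mul_right y c) hy, ?_⟩)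
    · exact fun h => hnx (jLe_trans h (jLe_mul_right x c))
    · exact fun h => hny (jLe_trans h (jLe_mul_right y c))
  · obtain ⟨⟨⟨u1, e1⟩, ⟨u2, e2⟩⟩, ⟨⟨v1, f1⟩, ⟨v2, f2⟩⟩⟩ := hH
    -- x*c and y*c are L-related
    have hL1 : x * c = u1 * (y * c) := by rw [e1, mul_assoc]
    have hL2 : y * c = u2 * (x * c) := by rw [e2, mul_assoc]
    have hcx : jLe (x * c) a0 := jLe_trans (jLe_mul_right x c) hx
    have hcy : jLe (y * c) a0 := jLe_trans (jLe_mul_right y c) hy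
    by_cases hc : jLe a0 (x * c)
    · have hcy0 : jLe a0 (y * c) := jLe_trans hc ⟨u1, 1, by rw [mul_one]; exact hL1⟩
      obtain ⟨w1, hw1⟩ := stab_right (rfl : x * c = x * c) (jLe_trans hx hc)
      obtain ⟨w2, hw2⟩ := stab_right (rfl : y * c = y * c) (jLe_trans hy hcy0)
      refine Or.inr (Or.inr ⟨hcx, hc, hcy, hcy0, ⟨⟨⟨u1, hL1⟩, ⟨u2, hL2⟩⟩,
        ⟨⟨w2 * v1 * c, ?_⟩, ⟨w1 * v2 * c, ?_⟩⟩⟩⟩)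
      · calc x * c = (y * v1) * c := by rw [← f1]
        _ = ((y * c) * w2 * v1) * c := by rw [← hw2]
        _ = (y * c) * (w2 * v1 * c) := by simp [mul_assoc]
      · calc y * c = (x * v2) * c := by rw [← f2]
        _ = ((x * c) * w1 * v2) * c := by rw [← hw1]
        _ = (x * c) * (w1 * v2 * c) := by simp [mul_assoc]
    · have hncy : ¬ jLe a0 (y * c) := fun h =>
        hc (jLe_trans h ⟨u2, 1, by rw [mul_one]; exact hL2⟩)
      exact Or.inr (Or.inl ⟨hcx, hc, hcy, hncy⟩)

end Main

/-- `θ_J` is a congruence of any finite monoid. -/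

theorem stmt15 {M : Type*} [Monoid M] [Fintype M] (a0 : M) :
    Equivalence (thetaRel a0) ∧
      ∀ x y c : M, thetaRel a0 x y →
        thetaRel a0 (c * x) (c * y) ∧ thetaRel a0 (x * c) (y * c) := by
  constructor
  · constructor
    · exact fun x => Or.inl rfl
    case symm =>
      intro x y h
      rcases h with rfl | ⟨hx, hnx, hy, hny⟩ | ⟨hx, hx0, hy, hy0, hH⟩
      · exact Or.inl rfl
      · exact Or.inr (Or.inl ⟨hy, hny, hx, hnx⟩)
      · exact Or.inr (Or.inr ⟨hy, hy0, hx, hx0, greenH_symm hH⟩)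
    case trans =>
      intro x y z h1 h2
      rcases h1 with rfl | ⟨hx, hnx, hy, hny⟩ | ⟨hx, hx0, hy, hy0, hH⟩
      · exact h2
      · rcases h2 with rfl | ⟨_, _, hz, hnz⟩ | ⟨_, hy0, _, _, _⟩
        · exact Or.inr (Or.inl ⟨hx, hnx, hy, hny⟩)
        · exact Or.inr (Or.inl ⟨hx, hnx, hz, hnz⟩)
        · exact absurd hy0 hny
      · rcases h2 with rfl | ⟨_, hny, _, _⟩ | ⟨_, _, hz, hz0, hH2⟩
        · exact Or.inr (Or.inr ⟨hx, hx0, hy, hy0, hH⟩)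
        · exact absurd hy0 hny
        · exact Or.inr (Or.inr ⟨hx, hx0, hz, hz0, greenH_trans hH hH2⟩)
  · intro x y c h
    exact ⟨theta_compat_left a0 c x y h, theta_compat_right a0 c x y h⟩
end

section
/- Every element of AO_n of rank n-1 is a product of elements from the generating set {x_1,...,x_n}; specifically, for any 1 ≤ i, j ≤ n of the same parity, the unique order-preserving bijection from {1,...,n}\{i} to {1,...,n}\{j} is a product of the x_k's. -/
/-- The (unique) order-preserving bijection from `Fin n \ {i}` onto `Fin n \ {j}`. -/
def opBij {n : ℕ} (i j : Fin n) : PT n := fun x =>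
  if hx : x = i then none
  else if hlt : x.val < i.val then
    (if hp : x.val < j.val then some ⟨x.val, lt_trans hp j.isLt⟩
     else some ⟨x.val + 1, by have := i.isLt; omega⟩)
  else
    (if hp : x.val - 1 < j.val then some ⟨x.val - 1, lt_trans hp j.isLt⟩
     else some ⟨x.val, x.isLt⟩)

/-- The generators `x_1, …, x_n` of `AO_n` (indexed 1-based by `i`):
`x_1 : X_1 → X_n` (`n` odd) or `X_1 → X_{n-1}` (`n` even); `x_2 : X_2 → X_{n-1}` (`n` odd)
or `X_2 → X_n` (`n` even); `x_i : X_i → X_{i-2}` for `3 ≤ i ≤ n`. -/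
def xg (n : ℕ) (hn : 2 ≤ n) (i : ℕ) : PT n :=
  if h3 : 3 ≤ i ∧ i ≤ n then opBij ⟨i - 1, by omega⟩ ⟨i - 3, by omega⟩
  else if i = 1 then
    opBij ⟨0, by omega⟩ (if n % 2 = 1 then ⟨n - 1, by omega⟩ else ⟨n - 2, by omega⟩)
  else
    opBij ⟨1, by omega⟩ (if n % 2 = 1 then ⟨n - 2, by omega⟩ else ⟨n - 1, by omega⟩)

/-- The generating set `{x_1, …, x_n}` of `AO_n`. -/
def AOgens (n : ℕ) (hn : 2 ≤ n) : Set (PT n) :=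
  {f | ∃ i : ℕ, 1 ≤ i ∧ i ≤ n ∧ f = xg n hn i}

/-!
The order-preserving bijections `opBij i j : X_i → X_j` form a groupoid: `opBij i j * opBij j k =
opBij i k`. The generators `x_3, …, x_n` are the steps `X_i → X_{i-2}`, so composing them moves
down within a parity class, and `x_1`, `x_2` jump from the bottom `X_1`, `X_2` of each parity
class to its top. To reach `X_j` from `X_i`, descend to the bottom of the parity class, jump to
its top, and descend again to `X_j`.
-/

theorem opBij_mul_opBij {n : ℕ} (i j k : Fin n) : opBij i j * opBij j k = opBij i k := by
  funext x
  show (opBij i j x).bind (opBij j k) = opBij i k x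
  rcases x with ⟨x, hx⟩; rcases i with ⟨i, hi⟩; rcases j with ⟨j, hj⟩; rcases k with ⟨k, hk⟩
  unfold opBij
  simp only [Fin.mk.injEq]
  split_ifs <;> simp only [Option.bind_none, Option.bind_some, Fin.mk.injEq] <;>
    split_ifs <;> first
      | rfl
      | (simp only [Option.some.injEq, Fin.mk.injEq]; omega)
      | omega

section Generation

variable {n : ℕ} (hn : 2 ≤ n)

theorem opBij_mem_AOgens_of_eq_add_two {i j : Fin n} (h : i.val = j.val + 2) :
    opBij i j ∈ AOgens n hn := by
  refine ⟨i.val + 1, by omega, by omega, ?_⟩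
  rw [xg, dif_pos ⟨by omega, by omega⟩]
  congr 1
  ext
  simp only
  omega

theorem exists_opBij_mem_AOgens_of_lt_two (b : ℕ) (hb : b < 2) :
    ∃ t : Fin n, t.val % 2 = b ∧ n - 2 ≤ t.val ∧
      opBij ⟨b, lt_of_lt_of_le hb hn⟩ t ∈ AOgens n hn := by
  interval_cases b
  · refine ⟨if n % 2 = 1 then ⟨n - 1, by omega⟩ else ⟨n - 2, by omega⟩, ?_, ?_,
      1, le_rfl, by omega, ?_⟩
    · split_ifs <;> simp only <;> omega
    · split_ifs <;> simp only <;> omega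
    · rw [xg, dif_neg (by omega), if_pos rfl]
  · refine ⟨if n % 2 = 1 then ⟨n - 2, by omega⟩ else ⟨n - 1, by omega⟩, ?_, ?_,
      2, by omega, hn, ?_⟩
    · split_ifs <;> simp only <;> omega
    · split_ifs <;> simp only <;> omega
    · rw [xg, dif_neg (by omega), if_neg (by decide : (2 : ℕ) ≠ 1)]

theorem opBij_mem_closure_of_lt {i j : Fin n} (hji : j < i) (hpar : i.val % 2 = j.val % 2) :
    opBij i j ∈ Submonoid.closure (AOgens n hn) := by
  obtain ⟨d, hd⟩ : ∃ d, i.val = j.val + 2 * d + 2 := ⟨(i.val - j.val) / 2 - 1, by omega⟩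
  clear hji hpar
  induction d generalizing i with
  | zero => exact Submonoid.subset_closure (opBij_mem_AOgens_of_eq_add_two hn hd)
  | succ d ih =>
    let k : Fin n := ⟨j.val + 2 * d + 2, by omega⟩
    rw [← opBij_mul_opBij i k j]
    have hik : opBij i k ∈ AOgens n hn := opBij_mem_AOgens_of_eq_add_two hn (by simp [k]; omega)
    exact mul_mem (Submonoid.subset_closure hik) (ih rfl)

theorem opBij_mem_closure_of_le_left {i j k : Fin n} (hij : i ≤ j)
    (hpar : i.val % 2 = j.val % 2) (h : opBij i k ∈ Submonoid.closure (AOgens n hn)) :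
    opBij j k ∈ Submonoid.closure (AOgens n hn) := by
  rcases hij.eq_or_lt with rfl | hlt
  · exact h
  · rw [← opBij_mul_opBij j i k]
    exact mul_mem (opBij_mem_closure_of_lt hn hlt hpar.symm) h

theorem opBij_mem_closure_of_le_right {i j k : Fin n} (hkj : k ≤ j)
    (hpar : j.val % 2 = k.val % 2) (h : opBij i j ∈ Submonoid.closure (AOgens n hn)) :
    opBij i k ∈ Submonoid.closure (AOgens n hn) := by
  rcases hkj.eq_or_lt with rfl | hlt
  · exact h
  · rw [← opBij_mul_opBij i j k]
    exact mul_mem h (opBij_mem_closure_of_lt hn hlt hpar)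

end Generation

/-- every rank-`n-1` element of `AO_n`, i.e. every order-preserving bijection
`X_i → X_j` with `i ≡ j (mod 2)`, is a product of the generators `x_1, …, x_n`. -/
theorem stmt17 {n : ℕ} (hn : 2 ≤ n) (i j : Fin n) (hpar : i.val % 2 = j.val % 2) :
    opBij i j ∈ Submonoid.closure (AOgens n hn) := by
  obtain ⟨t, htb, htop, hjump⟩ :=
    exists_opBij_mem_AOgens_of_lt_two hn (i.val % 2) (Nat.mod_lt _ two_pos)
  have hit : opBij i t ∈ Submonoid.closure (AOgens n hn) :=
    opBij_mem_closure_of_le_left hn (Fin.le_iff_val_le_val.2 (Nat.mod_le _ _))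
      (Nat.mod_mod _ _) (Submonoid.subset_closure hjump)
  exact opBij_mem_closure_of_le_right hn (by rw [Fin.le_iff_val_le_val]; omega) (by omega) hit
end
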